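/- Combining the occupancy-difference and total-variation lemmas with Pinsker and the mixture change-of-measure: under assumptions (i) P_{π_f}(s) ≤ C·P_β^T(s) for all s, (ii) P_β^T(g = f(s)|s) ≥ α > 0 for all s, (iii) d_β^T(s) ≤ γ·d_β^S(s) for all s, the RCSL regret satisfies J^T(π_f) − J^T(π̂_f) ≤ (C/α)·((N_S+N_T)/(N_S/γ + N_T))·H²·sqrt(2·L(π̂)), where L(π̂) = E_{s∼d_β^mix, g∼P_β^T(·|s)}[ KL(P_β^T(·|s,g) ‖ π̂(·|s,g)) ]. -/

import Mathlib

open Finset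

/-- State distribution at time `t` induced by policy `π` in an MDP with transition
kernel `P` and initial distribution `ρ`. -/
noncomputable def stateDist {S A : Type*} [Fintype S] [Fintype A]
    (P : S → A → S → ℝ) (ρ : S → ℝ) (π : S → A → ℝ) : ℕ → S → ℝ
  | 0 => ρ
  | (t + 1) => fun s' => ∑ s : S, ∑ a : A, stateDist P ρ π t s * π s a * P s a s'

/-- Normalized state-occupancy measure over horizon `H`. -/
noncomputable def occupancy {S A : Type*} [Fintype S] [Fintype A]
    (P : S → A → S → ℝ) (ρ : S → ℝ) (π : S → A → ℝ) (H : ℕ) (s : S) : ℝ :=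
  (1 / H) * ∑ t ∈ Finset.range H, stateDist P ρ π t s

/-- Expected cumulative reward of policy `π` over horizon `H`. -/
noncomputable def Jval {S A : Type*} [Fintype S] [Fintype A]
    (P : S → A → S → ℝ) (ρ : S → ℝ) (r : S → A → ℝ) (π : S → A → ℝ) (H : ℕ) : ℝ :=
  ∑ t ∈ Finset.range H, ∑ s : S, stateDist P ρ π t s * ∑ a : A, π s a * r s a

/-!
The regret telescopes over time: the state distributions of `πf` and `πhatf` drift apart, per
step, by at most the expected `ℓ¹` gap between the two policies, so the regret is at most `H²`
times that gap averaged over the occupancy of `πf`. Assumptions (i) and (iii) move the average to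
`dβT` and then to the mixture `dmix`; coverage (ii) charges the gap at `g = f s`, at cost `1/α`,
to its average over `g ∼ P_β^T(· | s)`; Jensen and Pinsker bound that average by `√(2L)`.
-/

open InformationTheory

lemma hasDerivAt_klFun_sub_three_mul_sq_div {t : ℝ} (ht : 0 < t) :
    HasDerivAt (fun x => klFun x - 3 * (x - 1) ^ 2 / (2 * (x + 2)))
      (Real.log t - 3 * (t - 1) * (t + 5) / (2 * (t + 2) ^ 2)) t := by
  have hq := ((((hasDerivAt_id' t).sub_const 1).pow 2).const_mul 3).div
    (((hasDerivAt_id' t).add_const 2).const_mul 2) (by positivity)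
  refine ((hasDerivAt_klFun ht.ne').sub hq).congr_deriv ?_
  simp only [Pi.pow_apply]
  field_simp
  ring

lemma hasDerivAt_log_sub_three_mul_mul_div {t : ℝ} (ht : 0 < t) :
    HasDerivAt (fun x => Real.log x - 3 * (x - 1) * (x + 5) / (2 * (x + 2) ^ 2))
      (t⁻¹ - 27 / (t + 2) ^ 3) t := by
  have hq := ((((hasDerivAt_id' t).sub_const 1).const_mul 3).mul
    ((hasDerivAt_id' t).add_const 5)).div
      ((((hasDerivAt_id' t).add_const 2).pow 2).const_mul 2)
        (by positivity : (2 * (t + 2) ^ 2 : ℝ) ≠ 0)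
  refine ((Real.hasDerivAt_log ht.ne').sub hq).congr_deriv ?_
  simp only [Pi.pow_apply, Pi.mul_apply]
  field_simp
  ring

theorem three_mul_sq_div_le_klFun {t : ℝ} (ht : 0 ≤ t) :
    3 * (t - 1) ^ 2 / (2 * (t + 2)) ≤ klFun t := by
  -- `φ(1) = φ'(1) = 0` and `φ'' = 1/x - 27/(x+2)³ ≥ 0` by AM-GM, so `φ` is minimal at `1`.
  set φ : ℝ → ℝ := fun x => klFun x - 3 * (x - 1) ^ 2 / (2 * (x + 2))
  have hcont : ContinuousOn φ (Set.Ici 0) :=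
    continuous_klFun.continuousOn.sub <| ContinuousOn.div (by fun_prop) (by fun_prop)
      fun x (hx : 0 ≤ x) => by positivity
  have hconv : ConvexOn ℝ (Set.Ici 0) φ := by
    refine convexOn_of_hasDerivWithinAt2_nonneg
      (f' := fun x => Real.log x - 3 * (x - 1) * (x + 5) / (2 * (x + 2) ^ 2))
      (f'' := fun x => x⁻¹ - 27 / (x + 2) ^ 3) (convex_Ici 0) hcont ?_ ?_ ?_ <;>
      simp only [interior_Ici, Set.mem_Ioi]
    · exact fun x hx => (hasDerivAt_klFun_sub_three_mul_sq_div hx).hasDerivWithinAt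
    · exact fun x hx => (hasDerivAt_log_sub_three_mul_mul_div hx).hasDerivWithinAt
    · intro x hx
      rw [sub_nonneg, div_le_iff₀ (by positivity), ← div_eq_inv_mul, le_div_iff₀ hx]
      nlinarith [sq_nonneg (x - 1)]
  have hmin : IsMinOn φ (Set.Ici 0) 1 := by
    refine hconv.isMinOn_of_rightDeriv_eq_zero (by simp) ?_
    rw [((hasDerivAt_klFun_sub_three_mul_sq_div one_pos).hasDerivWithinAt).derivWithin
      (uniqueDiffWithinAt_Ioi 1)]
    simp
  simpa [φ, klFun_one, sub_nonneg] using hmin (Set.mem_Ici.2 ht)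

theorem three_mul_sq_div_le_mul_log_div {p q : ℝ} (hp : 0 ≤ p) (hq : 0 < q) :
    3 * (p - q) ^ 2 / (p + 2 * q) ≤ 2 * (p * Real.log (p / q) + q - p) := by
  have h := mul_le_mul_of_nonneg_left (three_mul_sq_div_le_klFun (div_nonneg hp hq.le)) hq.le
  rw [klFun_apply] at h
  have : 0 < p + 2 * q := by positivity
  field_simp at h ⊢
  linarith

/-- Pinsker's inequality, via Cauchy-Schwarz with the weights `(p + 2q)/3`. -/
theorem sq_sum_abs_sub_le_two_mul_sum_mul_log_div {ι : Type*} [Fintype ι] {p q : ι → ℝ}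
    (hp0 : ∀ i, 0 ≤ p i) (hp1 : ∑ i, p i = 1) (hq0 : ∀ i, 0 < q i) (hq1 : ∑ i, q i = 1) :
    (∑ i, |p i - q i|) ^ 2 ≤ 2 * ∑ i, p i * Real.log (p i / q i) := by
  have hpq : ∀ i, 0 < p i + 2 * q i := fun i => by linarith [hp0 i, hq0 i]
  calc (∑ i, |p i - q i|) ^ 2
      ≤ (∑ i, (p i + 2 * q i) / 3) * ∑ i, 3 * (p i - q i) ^ 2 / (p i + 2 * q i) := by
        refine sum_sq_le_sum_mul_sum_of_sq_le_mul _ (fun i _ => (div_pos (hpq i) three_pos).le)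
          (fun i _ => div_nonneg (by positivity) (hpq i).le) (fun i _ => le_of_eq ?_)
        rw [sq_abs, div_mul_div_comm, eq_div_iff (mul_pos three_pos (hpq i)).ne']
        ring
    _ = ∑ i, 3 * (p i - q i) ^ 2 / (p i + 2 * q i) := by
        rw [← sum_div, sum_add_distrib, ← mul_sum, hp1, hq1]; norm_num
    _ ≤ ∑ i, 2 * (p i * Real.log (p i / q i) + q i - p i) :=
        sum_le_sum fun i _ => three_mul_sq_div_le_mul_log_div (hp0 i) (hq0 i)
    _ = 2 * ∑ i, p i * Real.log (p i / q i) := by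
        rw [← mul_sum, sum_sub_distrib, sum_add_distrib, hp1, hq1]; ring

theorem sq_sum_mul_le_sum_mul {ι : Type*} (s : Finset ι) {w x y : ι → ℝ}
    (hw0 : ∀ i ∈ s, 0 ≤ w i) (hw1 : ∑ i ∈ s, w i = 1)
    (hxy : ∀ i ∈ s, 0 < w i → x i ^ 2 ≤ y i) :
    (∑ i ∈ s, w i * x i) ^ 2 ≤ ∑ i ∈ s, w i * y i := by
  have hwxy : ∀ i ∈ s, w i * x i ^ 2 ≤ w i * y i := fun i hi => by
    rcases (hw0 i hi).eq_or_lt with h | h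
    · simp [← h]
    · exact mul_le_mul_of_nonneg_left (hxy i hi h) h.le
  simpa [hw1] using sum_sq_le_sum_mul_sum_of_sq_le_mul s hw0
    (fun i hi => (mul_nonneg (hw0 i hi) (sq_nonneg _)).trans (hwxy i hi))
    fun i hi => by
      rw [mul_pow, sq (w i), mul_assoc]; exact mul_le_mul_of_nonneg_left (hwxy i hi) (hw0 i hi)

theorem mul_le_sum_mul_of_le {ι : Type*} [Fintype ι] {w v : ι → ℝ} {α : ℝ}
    (hw : ∀ i, 0 ≤ w i) (hv : ∀ i, 0 ≤ v i) {i : ι} (hα : α ≤ w i) :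
    α * v i ≤ ∑ j, w j * v j :=
  (mul_le_mul_of_nonneg_right hα (hv i)).trans
    (single_le_sum (fun j _ => mul_nonneg (hw j) (hv j)) (mem_univ i))

theorem le_mul_mixture_of_le_mul {x y γ NS NT : ℝ} (hγ : 0 < γ) (hNS : 0 < NS) (hNT : 0 < NT)
    (h : x ≤ γ * y) :
    x ≤ (NS + NT) / (NS / γ + NT) * (NT / (NT + NS) * x + NS / (NT + NS) * y) := by
  have hxy : x / γ ≤ y := by rwa [div_le_iff₀' hγ]
  have hmix : (NS + NT) * (NT / (NT + NS) * x + NS / (NT + NS) * y) = NT * x + NS * y := by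
    field_simp; ring
  rw [div_mul_eq_mul_div, hmix, le_div_iff₀ (by positivity)]
  have hsplit : x * (NS / γ + NT) = NS * (x / γ) + NT * x := by ring
  linarith [mul_le_mul_of_nonneg_left hxy hNS.le]

theorem sum_mul_sum_mul_l1_le_sqrt_two_mul_kl {S A G : Type*} [Fintype S] [Fintype A] [Fintype G]
    {d : S → ℝ} (hd0 : ∀ s, 0 ≤ d s) (hd1 : ∑ s, d s = 1)
    {β : S → A → ℝ} (hβ0 : ∀ s a, 0 ≤ β s a) (hβ1 : ∀ s, ∑ a, β s a = 1)
    {Pg : S → A → G → ℝ} (hPg0 : ∀ s a g, 0 ≤ Pg s a g) (hPg1 : ∀ s a, ∑ g, Pg s a g = 1)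
    {p q : S → G → A → ℝ} (hp : ∀ s g a, p s g a = β s a * Pg s a g / ∑ a', β s a' * Pg s a' g)
    (hq0 : ∀ s g a, 0 < q s g a) (hq1 : ∀ s g, ∑ a, q s g a = 1) :
    ∑ s, d s * ∑ g, (∑ a, β s a * Pg s a g) * ∑ a, |p s g a - q s g a|
      ≤ √(2 * ∑ s, d s * ∑ g, (∑ a, β s a * Pg s a g) *
          ∑ a, p s g a * Real.log (p s g a / q s g a)) := by
  have hw0 : ∀ s g, 0 ≤ ∑ a, β s a * Pg s a g := fun s g =>
    sum_nonneg fun a _ => mul_nonneg (hβ0 s a) (hPg0 s a g)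
  have hw1 : ∀ s, ∑ g, ∑ a, β s a * Pg s a g = 1 := fun s => by
    rw [sum_comm]; simp only [← mul_sum, hPg1, mul_one, hβ1]
  have hpinsker : ∀ s g, 0 < ∑ a, β s a * Pg s a g →
      (∑ a, |p s g a - q s g a|) ^ 2 ≤ 2 * ∑ a, p s g a * Real.log (p s g a / q s g a) := by
    intro s g hw
    refine sq_sum_abs_sub_le_two_mul_sum_mul_log_div (fun a => ?_) ?_ (hq0 s g) (hq1 s g)
    · rw [hp]; exact div_nonneg (mul_nonneg (hβ0 s a) (hPg0 s a g)) hw.le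
    · simp only [hp]; rw [← sum_div, div_self hw.ne']
  have hsq := sq_sum_mul_le_sum_mul univ (fun s _ => hd0 s) hd1 fun s _ _ =>
    sq_sum_mul_le_sum_mul univ (fun g _ => hw0 s g) (hw1 s) fun g _ => hpinsker s g
  refine (le_abs_self _).trans (Real.abs_le_sqrt (hsq.trans_eq ?_))
  simp only [mul_left_comm _ (2 : ℝ), ← mul_sum]

section MDP

variable {S A : Type*} [Fintype S] [Fintype A] {P : S → A → S → ℝ} {ρ : S → ℝ}
  {π π' : S → A → ℝ}

theorem stateDist_succ_apply (t : ℕ) (s' : S) :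
    stateDist P ρ π (t + 1) s' = ∑ s, ∑ a, stateDist P ρ π t s * π s a * P s a s' := rfl

theorem stateDist_nonneg (hP0 : ∀ s a s', 0 ≤ P s a s') (hρ0 : ∀ s, 0 ≤ ρ s)
    (hπ0 : ∀ s a, 0 ≤ π s a) (t : ℕ) (s : S) : 0 ≤ stateDist P ρ π t s := by
  induction t generalizing s with
  | zero => exact hρ0 s
  | succ t ih =>
    exact sum_nonneg fun u _ => sum_nonneg fun a _ =>
      mul_nonneg (mul_nonneg (ih u) (hπ0 u a)) (hP0 u a s)

theorem sum_abs_sum_sum_mul_le (hP0 : ∀ s a s', 0 ≤ P s a s')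
    (hP1 : ∀ s a, ∑ s', P s a s' = 1) (x : S → A → ℝ) :
    ∑ s', |∑ s, ∑ a, x s a * P s a s'| ≤ ∑ s, ∑ a, |x s a| := by
  calc ∑ s', |∑ s, ∑ a, x s a * P s a s'|
      ≤ ∑ s', ∑ s, ∑ a, |x s a| * P s a s' := by
        gcongr with s'
        refine (abs_sum_le_sum_abs _ _).trans (sum_le_sum fun s _ => ?_)
        refine (abs_sum_le_sum_abs _ _).trans_eq (sum_congr rfl fun a _ => ?_)
        rw [abs_mul, abs_of_nonneg (hP0 s a s')]
    _ = ∑ s, ∑ a, |x s a| := by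
        rw [sum_comm]
        refine sum_congr rfl fun s _ => ?_
        rw [sum_comm]
        simp_rw [← mul_sum, hP1, mul_one]

theorem sum_abs_sub_stateDist_succ_le (hP0 : ∀ s a s', 0 ≤ P s a s')
    (hP1 : ∀ s a, ∑ s', P s a s' = 1) (hρ0 : ∀ s, 0 ≤ ρ s) (hπ0 : ∀ s a, 0 ≤ π s a)
    (hπ'0 : ∀ s a, 0 ≤ π' s a) (hπ'1 : ∀ s, ∑ a, π' s a = 1) (t : ℕ) :
    ∑ s, |stateDist P ρ π (t + 1) s - stateDist P ρ π' (t + 1) s|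
      ≤ ∑ s, |stateDist P ρ π t s - stateDist P ρ π' t s|
        + ∑ s, stateDist P ρ π t s * ∑ a, |π s a - π' s a| := by
  set d := stateDist P ρ π t
  set d' := stateDist P ρ π' t
  have hsplit : ∀ s a, |d s * π s a - d' s * π' s a|
      ≤ |d s - d' s| * π' s a + d s * |π s a - π' s a| := fun s a => by
    have hd := stateDist_nonneg hP0 hρ0 hπ0 t s
    calc |d s * π s a - d' s * π' s a|
        = |(d s - d' s) * π' s a + d s * (π s a - π' s a)| := by ring_nf
      _ ≤ _ := by
        refine (abs_add_le _ _).trans_eq ?_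
        rw [abs_mul, abs_mul, abs_of_nonneg (hπ'0 s a), abs_of_nonneg hd]
  calc ∑ s', |stateDist P ρ π (t + 1) s' - stateDist P ρ π' (t + 1) s'|
      = ∑ s', |∑ s, ∑ a, (d s * π s a - d' s * π' s a) * P s a s'| := by
        simp only [stateDist_succ_apply, ← sum_sub_distrib, sub_mul]
        rfl
    _ ≤ ∑ s, ∑ a, |d s * π s a - d' s * π' s a| := sum_abs_sum_sum_mul_le hP0 hP1 _
    _ ≤ ∑ s, ∑ a, (|d s - d' s| * π' s a + d s * |π s a - π' s a|) := by
        gcongr with s _ a; exact hsplit s a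
    _ = _ := by
        simp only [sum_add_distrib, ← mul_sum, hπ'1, mul_one]

theorem sum_abs_sub_stateDist_le (hP0 : ∀ s a s', 0 ≤ P s a s')
    (hP1 : ∀ s a, ∑ s', P s a s' = 1) (hρ0 : ∀ s, 0 ≤ ρ s) (hπ0 : ∀ s a, 0 ≤ π s a)
    (hπ'0 : ∀ s a, 0 ≤ π' s a) (hπ'1 : ∀ s, ∑ a, π' s a = 1) (t : ℕ) :
    ∑ s, |stateDist P ρ π t s - stateDist P ρ π' t s|
      ≤ ∑ k ∈ range t, ∑ s, stateDist P ρ π k s * ∑ a, |π s a - π' s a| := by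
  induction t with
  | zero => simp [stateDist]
  | succ t ih =>
    rw [sum_range_succ]
    exact (sum_abs_sub_stateDist_succ_le hP0 hP1 hρ0 hπ0 hπ'0 hπ'1 t).trans (by gcongr)

theorem sum_mul_sum_mul_reward_sub_le {r : S → A → ℝ} (hr0 : ∀ s a, 0 ≤ r s a)
    (hr1 : ∀ s a, r s a ≤ 1) (hπ'0 : ∀ s a, 0 ≤ π' s a) (hπ'1 : ∀ s, ∑ a, π' s a = 1)
    {d d' : S → ℝ} (hd : ∀ s, 0 ≤ d s) :
    ∑ s, d s * ∑ a, π s a * r s a - ∑ s, d' s * ∑ a, π' s a * r s a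
      ≤ ∑ s, |d s - d' s| + ∑ s, d s * ∑ a, |π s a - π' s a| := by
  rw [← sum_sub_distrib, ← sum_add_distrib]
  refine sum_le_sum fun s _ => ?_
  have hv0 : 0 ≤ ∑ a, π' s a * r s a := sum_nonneg fun a _ => mul_nonneg (hπ'0 s a) (hr0 s a)
  have hv1 : ∑ a, π' s a * r s a ≤ 1 :=
    (sum_le_sum fun a _ => mul_le_of_le_one_right (hπ'0 s a) (hr1 s a)).trans_eq (hπ'1 s)
  have hgap : ∑ a, π s a * r s a - ∑ a, π' s a * r s a ≤ ∑ a, |π s a - π' s a| := by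
    rw [← sum_sub_distrib]
    refine sum_le_sum fun a _ => ?_
    rw [← sub_mul]
    exact (mul_le_mul_of_nonneg_right (le_abs_self _) (hr0 s a)).trans
      (mul_le_of_le_one_right (abs_nonneg _) (hr1 s a))
  calc d s * ∑ a, π s a * r s a - d' s * ∑ a, π' s a * r s a
      = (d s - d' s) * ∑ a, π' s a * r s a
        + d s * (∑ a, π s a * r s a - ∑ a, π' s a * r s a) := by ring
    _ ≤ |d s - d' s| + d s * ∑ a, |π s a - π' s a| := by
      gcongr
      · exact (mul_le_mul_of_nonneg_right (le_abs_self _) hv0).trans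
          (mul_le_of_le_one_right (abs_nonneg _) hv1)
      · exact hd s

theorem sum_range_sum_stateDist_mul_eq (H : ℕ) (v : S → ℝ) :
    ∑ t ∈ range H, ∑ s, stateDist P ρ π t s * v s = H * ∑ s, occupancy P ρ π H s * v s := by
  rw [sum_comm, mul_sum]
  refine sum_congr rfl fun s _ => ?_
  rcases H.eq_zero_or_pos with rfl | hH
  · simp
  · rw [← sum_mul, occupancy, ← mul_assoc, ← mul_assoc, mul_one_div_cancel (by positivity),
      one_mul]

theorem Jval_sub_le (hP0 : ∀ s a s', 0 ≤ P s a s') (hP1 : ∀ s a, ∑ s', P s a s' = 1)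
    (hρ0 : ∀ s, 0 ≤ ρ s) {r : S → A → ℝ} (hr0 : ∀ s a, 0 ≤ r s a) (hr1 : ∀ s a, r s a ≤ 1)
    (hπ0 : ∀ s a, 0 ≤ π s a) (hπ'0 : ∀ s a, 0 ≤ π' s a) (hπ'1 : ∀ s, ∑ a, π' s a = 1)
    (H : ℕ) :
    Jval P ρ r π H - Jval P ρ r π' H
      ≤ H ^ 2 * ∑ s, occupancy P ρ π H s * ∑ a, |π s a - π' s a| := by
  set E := fun t => ∑ s, stateDist P ρ π t s * ∑ a, |π s a - π' s a|
  have hE : ∀ t, 0 ≤ E t := fun t => sum_nonneg fun s _ =>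
    mul_nonneg (stateDist_nonneg hP0 hρ0 hπ0 t s) (sum_nonneg fun a _ => abs_nonneg _)
  have hstep : ∀ t ∈ range H, ∑ s, stateDist P ρ π t s * ∑ a, π s a * r s a
      - ∑ s, stateDist P ρ π' t s * ∑ a, π' s a * r s a ≤ ∑ k ∈ range H, E k := by
    intro t ht
    calc _ ≤ ∑ k ∈ range t, E k + E t :=
          (sum_mul_sum_mul_reward_sub_le hr0 hr1 hπ'0 hπ'1 (stateDist_nonneg hP0 hρ0 hπ0 t)).trans
            (add_le_add (sum_abs_sub_stateDist_le hP0 hP1 hρ0 hπ0 hπ'0 hπ'1 t) le_rfl)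
      _ = ∑ k ∈ range (t + 1), E k := (sum_range_succ E t).symm
      _ ≤ ∑ k ∈ range H, E k :=
          sum_le_sum_of_subset_of_nonneg (range_subset_range.2 (mem_range.1 ht)) fun k _ _ => hE k
  calc Jval P ρ r π H - Jval P ρ r π' H
      ≤ ∑ t ∈ range H, ∑ k ∈ range H, E k := by
        rw [Jval, Jval, ← sum_sub_distrib]; exact sum_le_sum hstep
    _ = H ^ 2 * ∑ s, occupancy P ρ π H s * ∑ a, |π s a - π' s a| := by
        rw [sum_const, card_range, nsmul_eq_mul, sum_range_sum_stateDist_mul_eq, sq, mul_assoc]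

end MDP

theorem rcsl_target_regret_general
    {S A G : Type*} [Fintype S] [Fintype A] [Fintype G]
    (P : S → A → S → ℝ) (ρ : S → ℝ) (r : S → A → ℝ) (H : ℕ)
    (hP0 : ∀ s a s', 0 ≤ P s a s') (hP1 : ∀ s a, ∑ s' : S, P s a s' = 1)
    (hρ0 : ∀ s, 0 ≤ ρ s)
    (hr0 : ∀ s a, 0 ≤ r s a) (hr1 : ∀ s a, r s a ≤ 1)
    -- behavior policy and conditional return distribution in the target domain
    (β : S → A → ℝ) (hβ0 : ∀ s a, 0 ≤ β s a) (hβ1 : ∀ s, ∑ a : A, β s a = 1)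
    (Pg : S → A → G → ℝ) (hPg0 : ∀ s a g, 0 ≤ Pg s a g)
    (hPg1 : ∀ s a, ∑ g : G, Pg s a g = 1)
    -- conditioning function and the induced RCSL policy
    (f : S → G)
    (πβg : S → G → A → ℝ)
    (hπβg : ∀ s g a, πβg s g a
      = β s a * Pg s a g / (∑ a' : A, β s a' * Pg s a' g))
    (πf : S → A → ℝ) (hπf : ∀ s a, πf s a = πβg s (f s) a)
    -- estimated return-conditioned policy
    (πhat : S → G → A → ℝ) (hπhat0 : ∀ s g a, 0 < πhat s g a)
    (hπhat1 : ∀ s g, ∑ a : A, πhat s g a = 1)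
    (πhatf : S → A → ℝ) (hπhatf : ∀ s a, πhatf s a = πhat s (f s) a)
    -- behavior occupancies in the target and source environments, and the mixture
    (dβT dβS : S → ℝ)
    (hdβT0 : ∀ s, 0 ≤ dβT s) (hdβT1 : ∑ s : S, dβT s = 1)
    (hdβS0 : ∀ s, 0 ≤ dβS s) (hdβS1 : ∑ s : S, dβS s = 1)
    (NS NT : ℝ) (hNS : 0 < NS) (hNT : 0 < NT)
    (dmix : S → ℝ)
    (hdmix : ∀ s, dmix s = NT / (NT + NS) * dβT s + NS / (NT + NS) * dβS s)
    -- assumptions (i) bounded occupancy mismatch, (ii) return coverage,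
    -- (iii) domain occupancy overlap
    (C α γ : ℝ) (hC : 1 ≤ C) (hα : 0 < α) (hγ : 1 ≤ γ)
    (hmismatch : ∀ s, occupancy P ρ πf H s ≤ C * dβT s)
    (hcoverage : ∀ s, α ≤ ∑ a : A, β s a * Pg s a (f s))
    (hoverlap : ∀ s, dβT s ≤ γ * dβS s)
    -- the KL training loss
    (L : ℝ)
    (hL : L = ∑ s : S, dmix s * ∑ g : G,
        (∑ a : A, β s a * Pg s a g) *
          ∑ a : A, πβg s g a * Real.log (πβg s g a / πhat s g a)) :
    Jval P ρ r πf H - Jval P ρ r πhatf H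
      ≤ (C / α) * ((NS + NT) / (NS / γ + NT)) * (H : ℝ) ^ 2 * Real.sqrt (2 * L) := by
  set D : S → ℝ := fun s => ∑ a, |πf s a - πhatf s a|
  set y : S → ℝ := fun s => ∑ g, (∑ a, β s a * Pg s a g) * ∑ a, |πβg s g a - πhat s g a|
  set κ := (NS + NT) / (NS / γ + NT)
  have hγ0 : 0 < γ := hγ.trans_lt' one_pos
  have hC0 : 0 ≤ C := hC.trans' zero_le_one
  have hπf0 : ∀ s a, 0 ≤ πf s a := fun s a => by
    rw [hπf, hπβg]
    exact div_nonneg (mul_nonneg (hβ0 s a) (hPg0 s a (f s))) (hα.trans_le (hcoverage s)).le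
  have hπhatf0 : ∀ s a, 0 ≤ πhatf s a := fun s a => hπhatf s a ▸ (hπhat0 s (f s) a).le
  have hπhatf1 : ∀ s, ∑ a, πhatf s a = 1 := fun s => by simp only [hπhatf, hπhat1]
  have hdmix0 : ∀ s, 0 ≤ dmix s := fun s => by
    rw [hdmix]; have := hdβT0 s; have := hdβS0 s; positivity
  have hdmix1 : ∑ s, dmix s = 1 := by
    simp only [hdmix, sum_add_distrib, ← mul_sum, hdβT1, hdβS1]
    field_simp
  have hlocal : ∀ s, occupancy P ρ πf H s * D s ≤ C / α * κ * (dmix s * y s) := fun s => by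
    have hD0 : 0 ≤ D s := sum_nonneg fun a _ => abs_nonneg _
    have hT : dβT s ≤ κ * dmix s := hdmix s ▸ le_mul_mixture_of_le_mul hγ0 hNS hNT (hoverlap s)
    have hcov : α * D s ≤ y s := by
      simp only [D, y, hπf, hπhatf]
      exact mul_le_sum_mul_of_le (fun g => sum_nonneg fun a _ => mul_nonneg (hβ0 s a) (hPg0 s a g))
        (fun g => sum_nonneg fun a _ => abs_nonneg (πβg s g a - πhat s g a)) (hcoverage s)
    have := hdmix0 s
    calc occupancy P ρ πf H s * D s ≤ C * (κ * dmix s) * D s := by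
          gcongr; exact (hmismatch s).trans (by gcongr)
      _ = C / α * κ * dmix s * (α * D s) := by field_simp
      _ ≤ C / α * κ * dmix s * y s := by gcongr
      _ = _ := mul_assoc _ _ _
  calc Jval P ρ r πf H - Jval P ρ r πhatf H
      ≤ H ^ 2 * ∑ s, occupancy P ρ πf H s * D s :=
        Jval_sub_le hP0 hP1 hρ0 hr0 hr1 hπf0 hπhatf0 hπhatf1 H
    _ ≤ H ^ 2 * ∑ s, C / α * κ * (dmix s * y s) := by
        gcongr H ^ 2 * ?_; exact sum_le_sum fun s _ => hlocal s
    _ ≤ H ^ 2 * (C / α * κ * √(2 * L)) := by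
        rw [← mul_sum, hL]
        gcongr
        exact sum_mul_sum_mul_l1_le_sqrt_two_mul_kl hdmix0 hdmix1 hβ0 hβ1 hPg0 hPg1 hπβg hπhat0
          hπhat1
    _ = _ := by ring

/-- Target regret bound for off-dynamics RCSL (Theorem A.3): under bounded occupancy
mismatch, return coverage, and domain occupancy overlap, the regret of the estimated
return-conditioned policy is bounded by
`(C/α)·((N_S+N_T)/(N_S/γ+N_T))·H²·sqrt(2·L(πhat))`. -/
theorem rcsl_target_regret
    {S A G : Type*} [Fintype S] [Fintype A] [Fintype G]
    (P : S → A → S → ℝ) (ρ : S → ℝ) (r : S → A → ℝ) (H : ℕ) (hH : 0 < H)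
    (hP0 : ∀ s a s', 0 ≤ P s a s') (hP1 : ∀ s a, ∑ s' : S, P s a s' = 1)
    (hρ0 : ∀ s, 0 ≤ ρ s) (hρ1 : ∑ s : S, ρ s = 1)
    (hr0 : ∀ s a, 0 ≤ r s a) (hr1 : ∀ s a, r s a ≤ 1)
    -- behavior policy and conditional return distribution in the target domain
    (β : S → A → ℝ) (hβ0 : ∀ s a, 0 ≤ β s a) (hβ1 : ∀ s, ∑ a : A, β s a = 1)
    (Pg : S → A → G → ℝ) (hPg0 : ∀ s a g, 0 ≤ Pg s a g)
    (hPg1 : ∀ s a, ∑ g : G, Pg s a g = 1)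
    -- conditioning function and the induced RCSL policy
    (f : S → G)
    (πβg : S → G → A → ℝ)
    (hπβg : ∀ s g a, πβg s g a
      = β s a * Pg s a g / (∑ a' : A, β s a' * Pg s a' g))
    (πf : S → A → ℝ) (hπf : ∀ s a, πf s a = πβg s (f s) a)
    -- estimated return-conditioned policy
    (πhat : S → G → A → ℝ) (hπhat0 : ∀ s g a, 0 < πhat s g a)
    (hπhat1 : ∀ s g, ∑ a : A, πhat s g a = 1)
    (πhatf : S → A → ℝ) (hπhatf : ∀ s a, πhatf s a = πhat s (f s) a)
    -- behavior occupancies in the target and source environments, and the mixture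
    (dβT dβS : S → ℝ)
    (hdβT0 : ∀ s, 0 ≤ dβT s) (hdβT1 : ∑ s : S, dβT s = 1)
    (hdβS0 : ∀ s, 0 ≤ dβS s) (hdβS1 : ∑ s : S, dβS s = 1)
    (NS NT : ℝ) (hNS : 0 < NS) (hNT : 0 < NT)
    (dmix : S → ℝ)
    (hdmix : ∀ s, dmix s = NT / (NT + NS) * dβT s + NS / (NT + NS) * dβS s)
    -- assumptions (i) bounded occupancy mismatch, (ii) return coverage,
    -- (iii) domain occupancy overlap
    (C α γ : ℝ) (hC : 1 ≤ C) (hα : 0 < α) (hγ : 1 ≤ γ)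
    (hmismatch : ∀ s, occupancy P ρ πf H s ≤ C * dβT s)
    (hcoverage : ∀ s, α ≤ ∑ a : A, β s a * Pg s a (f s))
    (hoverlap : ∀ s, dβT s ≤ γ * dβS s)
    -- the KL training loss
    (L : ℝ)
    (hL : L = ∑ s : S, dmix s * ∑ g : G,
        (∑ a : A, β s a * Pg s a g) *
          ∑ a : A, πβg s g a * Real.log (πβg s g a / πhat s g a)) :
    Jval P ρ r πf H - Jval P ρ r πhatf H
      ≤ (C / α) * ((NS + NT) / (NS / γ + NT)) * (H : ℝ) ^ 2 * Real.sqrt (2 * L) :=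
  rcsl_target_regret_general P ρ r H hP0 hP1 hρ0 hr0 hr1 β hβ0 hβ1 Pg hPg0 hPg1 f πβg hπβg πf hπf
    πhat hπhat0 hπhat1 πhatf hπhatf dβT dβS hdβT0 hdβT1 hdβS0 hdβS1 NS NT hNS hNT dmix hdmix C α γ
    hC hα hγ hmismatch hcoverage hoverlap L hL
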